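/- Let R : 𝒳 → PMF(𝒴) be a local randomizer that is (ε,δ)-differentially private with ε > 2/3 and δ < (β / (8n·ln(n/β)))·e^{−6ε}, and let A be an analyzer such that the local protocol P = (R, A) is (α,β)-accurate for a function f : 𝒳^n → 𝒵 with respect to a distance function d : 𝒵 × 𝒵 → ℝ, where β ∈ (0,1). Then there exists a local randomizer R' : 𝒳 → PMF(𝒴) that is (8ε, 0)-differentially private and such that the local protocol P' = (R', A) is (α, 4β)-accurate for f with respect to d. -/

import Mathlib

open scoped ENNReal Classical

noncomputable section

namespace ShuffledDP

universe u v w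

lemma half_le_one : (2⁻¹ : ℝ≥0∞) ≤ 1 := by
  simp [ENNReal.inv_le_one]

/-- Independent samples from a finite family of PMFs, collected (in order) as a list. -/
noncomputable def indep {α : Type u} : (n : ℕ) → (Fin n → PMF α) → PMF (List α)
  | 0, _ => PMF.pure []
  | n + 1, f =>
      (f 0).bind fun y => (indep n fun i => f i.succ).bind fun ys => PMF.pure (y :: ys)

/-- `(ε, δ)`-differential privacy of a mechanism `M` with respect to a
neighboring relation `nbr` on inputs. -/
def DPFor {I : Type u} {Z : Type v} (nbr : I → I → Prop) (M : I → PMF Z) (ε δ : ℝ) : Prop :=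
  ∀ x x', nbr x x' → ∀ T : Set Z,
    (M x).toOuterMeasure T ≤
      ENNReal.ofReal (Real.exp ε) * (M x').toOuterMeasure T + ENNReal.ofReal δ

/-- Two datasets are neighbors if they differ in at most one coordinate. -/
def Neighbor {n : ℕ} {X : Type u} (x x' : Fin n → X) : Prop :=
  ∃ j, ∀ i, i ≠ j → x i = x' i

/-- The randomized-response local randomizer `R_{n,λ}`: output the input bit with
probability `1 - λ/n` and a uniformly random bit with probability `λ/n`. -/
noncomputable def rr (n : ℕ) (lam : ℝ) (x : Bool) : PMF Bool :=
  (PMF.bernoulli (min (Real.toNNReal (lam / n)) 1) (min_le_right _ _)).bind fun b =>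
    if b then PMF.bernoulli 2⁻¹ (by simpa using ENNReal.toNNReal_mono ENNReal.one_ne_top half_le_one) else PMF.pure x

/-- Binomial distribution, valued in `ℕ`. -/
noncomputable def binom (p : ℝ≥0∞) (h : p ≤ 1) (m : ℕ) : PMF ℕ :=
  (PMF.binomial p.toNNReal (by simpa using ENNReal.toNNReal_mono ENNReal.one_ne_top h) m).map Fin.val

/-- Uniform distribution over the subsets of `Fin n` of size `s`. -/
noncomputable def uniformSubset (n s : ℕ) : PMF (Finset (Fin n)) :=
  if h : ((Finset.univ : Finset (Fin n)).powersetCard s).Nonempty then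
    PMF.uniformOfFinset _ h
  else PMF.pure ∅

/-- `∑_{i ∉ H} x_i` for a boolean dataset `x`. -/
def sumOutside {n : ℕ} (H : Finset (Fin n)) (x : Fin n → Bool) : ℕ :=
  ∑ i ∈ Hᶜ, (if x i then 1 else 0)

/-- The mechanism `C_H`: output `∑_{i ∉ H} x_i + B` with `B ~ Bin(|H|, 1/2)`. -/
noncomputable def CH (n : ℕ) (H : Finset (Fin n)) (x : Fin n → Bool) : PMF ℕ :=
  (binom 2⁻¹ half_le_one H.card).map fun B => sumOutside H x + B

/-- The mechanism `C_s`: sample `H` uniformly among size-`s` subsets, then run `C_H`. -/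
noncomputable def Cs (n s : ℕ) (x : Fin n → Bool) : PMF ℕ :=
  (uniformSubset n s).bind fun H => CH n H x

/-- The mechanism `C_λ`: sample `s ~ Bin(n, λ/n)`, then run `C_s`. -/
noncomputable def Cmech (n : ℕ) (lam : ℝ) (x : Fin n → Bool) : PMF ℕ :=
  (binom (min (ENNReal.ofReal (lam / n)) 1) (min_le_right _ _) n).bind fun s => Cs n s x

/-- The shuffled bit-sum mechanism `Π_{n,λ}`: the random multiset `{y_1, …, y_n}`
of the outputs `y_i ~ R_{n,λ}(x_i)`. -/
noncomputable def shuffleBit (n : ℕ) (lam : ℝ) (x : Fin n → Bool) : PMF (Multiset Bool) :=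
  (indep n fun i => rr n lam (x i)).map fun l => (l : Multiset Bool)

/-- The bit-sum protocol output `P_{n,λ}(x) = (n/(n-λ)) (∑ y_i - λ/2)`. -/
noncomputable def bitSumOutput (n : ℕ) (lam : ℝ) (x : Fin n → Bool) : PMF ℝ :=
  (indep n fun i => rr n lam (x i)).map fun l =>
    ((n : ℝ) / (n - lam)) * ((l.count true : ℝ) - lam / 2)

/-- The randomized-rounding encoder `E_r`. -/
noncomputable def encoder (r : ℕ) (x : ℝ) : PMF (Fin r → Bool) :=
  (PMF.bernoulli (min (Real.toNNReal (x * r - ⌈x * r⌉ + 1)) 1) (min_le_right _ _)).map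
    fun b i => if ((i : ℕ) : ℤ) + 1 < ⌈x * r⌉ then true
      else if ((i : ℕ) : ℤ) + 1 = ⌈x * r⌉ then b else false

/-- The real-sum shuffled mechanism `Π^ℝ_{n,λ,r}`: the random multiset of all `n·r`
bits `y_{i,j} ~ R_{n,λ}(b_{i,j})` where `(b_{i,1},…,b_{i,r}) = E_r(x_i)`. -/
noncomputable def realShuffle (n : ℕ) (lam : ℝ) (r : ℕ) (X : Fin n → ℝ) :
    PMF (Multiset Bool) :=
  (indep n fun i =>
      (encoder r (X i)).bind fun b =>
        (indep r fun j => rr n lam (b j)).map fun l => (l : Multiset Bool)).map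
    fun ms => ms.sum

/-- The real-sum protocol output `z = (1/r)(n/(n-λ)) (∑_{i,j} y_{i,j} - λ r/2)`. -/
noncomputable def realOutput (n : ℕ) (lam : ℝ) (r : ℕ) (X : Fin n → ℝ) : PMF ℝ :=
  (realShuffle n lam r X).map fun m =>
    (1 / (r : ℝ)) * ((n : ℝ) / (n - lam)) * ((m.count true : ℝ) - lam * r / 2)

/-- The shuffled mechanism associated with a randomizer producing a multiset of
messages: the union (multiset sum) of the `n` users' message multisets. -/
noncomputable def shuffM {𝒳 : Type u} {𝒴 : Type v} (n : ℕ) (R : 𝒳 → PMF (Multiset 𝒴))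
    (x : Fin n → 𝒳) : PMF (Multiset 𝒴) :=
  (indep n fun i => R (x i)).map fun l => l.sum

/-- The multiset of the `m` messages output by an `m`-message randomizer. -/
noncomputable def vecR {𝒳 : Type u} {𝒴 : Type v} {m : ℕ} (R : 𝒳 → PMF (Fin m → 𝒴)) :
    𝒳 → PMF (Multiset 𝒴) :=
  fun a => (R a).map fun v => ((List.ofFn v : List 𝒴) : Multiset 𝒴)

/-- The one-message shuffled mechanism `Π_R`: the random multiset `{R(x_1), …, R(x_n)}`. -/
noncomputable def shuffle1 {𝒳 : Type u} {𝒴 : Type v} (n : ℕ) (R : 𝒳 → PMF 𝒴)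
    (x : Fin n → 𝒳) : PMF (Multiset 𝒴) :=
  (indep n fun i => R (x i)).map fun l => (l : Multiset 𝒴)

/-- `(ε, δ)`-differential privacy of a local randomizer (any two inputs are neighbors). -/
def RandDP {𝒳 : Type u} {𝒴 : Type v} (R : 𝒳 → PMF 𝒴) (ε δ : ℝ) : Prop :=
  ∀ x x' : 𝒳, ∀ T : Set 𝒴,
    (R x).toOuterMeasure T ≤
      ENNReal.ofReal (Real.exp ε) * (R x').toOuterMeasure T + ENNReal.ofReal δ

/-- The output of the local protocol `(R, A)`. -/
noncomputable def localOut {𝒳 : Type u} {𝒴 : Type v} {𝒵 : Type w} (n : ℕ)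
    (R : 𝒳 → PMF 𝒴) (A : List 𝒴 → 𝒵) (X : Fin n → 𝒳) : PMF 𝒵 :=
  (indep n fun i => R (X i)).map A

/-- `(a, b)`-accuracy of a protocol `P` for a function `f` w.r.t. a distance `d`. -/
def AccFor {I : Type u} {𝒵 : Type w} (P : I → PMF 𝒵) (f : I → 𝒵) (d : 𝒵 → 𝒵 → ℝ)
    (a b : ℝ) : Prop :=
  ∀ X, ENNReal.ofReal (1 - b) ≤ (P X).toOuterMeasure {z | d z (f X) ≤ a}

/-!
Fix a reference input `x₀` and clamp the density of every `R x` into the band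
`[e^{-3ε} R x₀, e^{3ε} R x₀]`, then renormalise. Since `e^{ε} · e^{-3ε} ≤ 1/2`, the
`(ε, δ)`-guarantee between `R x` and `R x₀` forces the clamping to remove or add mass at most
`2δ` each way. So the normalising constants lie in `[1 - 2δ, 1 + 2δ]`, the new densities differ
pointwise by a factor at most `2 e^{6ε} ≤ e^{8ε}`, and each new `R' x` is within `4δ` of `R x` in
total variation. A hybrid argument over the `n` users then costs at most `4nδ ≤ β/2` of accuracy.
When `β ≥ 1/4` the accuracy claim is vacuous and a constant randomizer suffices.
-/

lemma toOuterMeasure_le_one {α : Type*} (p : PMF α) (s : Set α) : p.toOuterMeasure s ≤ 1 :=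
  (MeasureTheory.measure_mono (Set.subset_univ s)).trans
    ((p.toOuterMeasure_apply_eq_one_iff _).2 (Set.subset_univ _)).le

lemma tsum_le_tsum_add_tsum_tsub {α : Type*} (f g : α → ℝ≥0∞) :
    ∑' y, f y ≤ ∑' y, g y + ∑' y, (f y - g y) :=
  (ENNReal.tsum_le_tsum fun _ => le_add_tsub).trans ENNReal.tsum_add.le

lemma le_two_mul_of_le_inv_two_mul_add {a d : ℝ≥0∞} (ha : a ≠ ⊤) (h : a ≤ 2⁻¹ * a + d) :
    a ≤ 2 * d := by
  have hhalf : a / 2 ≤ d := by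
    rw [← ENNReal.div_eq_inv_mul] at h
    rw [← ENNReal.add_le_add_iff_left (ENNReal.div_ne_top ha two_ne_zero), ENNReal.add_halves]
    exact h
  calc a = 2 * (a / 2) := (ENNReal.mul_div_cancel two_ne_zero ENNReal.ofNat_ne_top).symm
    _ ≤ 2 * d := by gcongr

lemma le_two_mul_of_le_one_add {a m d : ℝ≥0∞} (ha : a ≤ 1 + 2 * d) (hm : 1 ≤ m + 2 * d)
    (hd : 6 * d ≤ 1) : a ≤ 2 * m := by
  have hd_top : d ≠ ⊤ :=
    ne_top_of_le_ne_top ENNReal.one_ne_top ((le_mul_of_one_le_left' (by norm_num)).trans hd)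
  rw [← ENNReal.add_le_add_iff_right (ENNReal.mul_ne_top (a := 4) (by norm_num) hd_top)]
  calc a + 4 * d ≤ 1 + 2 * d + 4 * d := by gcongr
    _ = 1 + 6 * d := by ring
    _ ≤ 2 * 1 := by rw [mul_one, ← one_add_one_eq_two]; gcongr
    _ ≤ 2 * (m + 2 * d) := by gcongr
    _ = 2 * m + 4 * d := by ring

lemma tsum_mul_le_tsum_mul_add_tsum_tsub {α : Type*} (p q g : α → ℝ≥0∞) (hg : ∀ y, g y ≤ 1) :
    ∑' y, p y * g y ≤ ∑' y, q y * g y + ∑' y, (p y - q y) := by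
  calc ∑' y, p y * g y ≤ ∑' y, (q y * g y + (p y - q y)) := by
        refine ENNReal.tsum_le_tsum fun y => ?_
        calc p y * g y ≤ (q y + (p y - q y)) * g y := by gcongr; exact le_add_tsub
          _ = q y * g y + (p y - q y) * g y := add_mul _ _ _
          _ ≤ q y * g y + (p y - q y) := by gcongr; exact mul_le_of_le_one_right' (hg y)
    _ = _ := ENNReal.tsum_add

lemma indep_succ {α : Type u} (n : ℕ) (p : Fin (n + 1) → PMF α) :
    indep (n + 1) p = (p 0).bind fun y => (indep n fun i => p i.succ).map (y :: ·) := rfl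

lemma indep_toOuterMeasure_le_add {α : Type u} {η : ℝ≥0∞} :
    ∀ {n : ℕ} {p q : Fin n → PMF α}, (∀ i, ∑' y, (p i y - q i y) ≤ η) → ∀ T,
      (indep n p).toOuterMeasure T ≤ (indep n q).toOuterMeasure T + n * η
  | 0, p, q, _, T => by simp [indep]
  | n + 1, p, q, h, T => by
    set Q : α → ℝ≥0∞ := fun y => (indep n fun i => q i.succ).toOuterMeasure ((y :: ·) ⁻¹' T)
    have ih : ∀ y, (indep n fun i => p i.succ).toOuterMeasure ((y :: ·) ⁻¹' T) ≤ Q y + n * η :=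
      fun y => indep_toOuterMeasure_le_add (fun i => h i.succ) _
    simp only [indep_succ, PMF.toOuterMeasure_bind_apply, PMF.toOuterMeasure_map_apply]
    calc ∑' y, p 0 y * (indep n fun i => p i.succ).toOuterMeasure ((y :: ·) ⁻¹' T)
        ≤ ∑' y, (p 0 y * Q y + p 0 y * (n * η)) := by
          refine ENNReal.tsum_le_tsum fun y => ?_
          rw [← mul_add]
          exact mul_le_mul_right (ih y) _
      _ = ∑' y, p 0 y * Q y + n * η := by
          rw [ENNReal.tsum_add, ENNReal.tsum_mul_right, PMF.tsum_coe, one_mul]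
      _ ≤ ∑' y, q 0 y * Q y + η + n * η := by
          gcongr
          exact (tsum_mul_le_tsum_mul_add_tsum_tsub _ _ _
            fun y => toOuterMeasure_le_one _ _).trans (by gcongr; exact h 0)
      _ = ∑' y, q 0 y * Q y + ↑(n + 1) * η := by push_cast; ring

section Clamp

variable {𝒴 : Type*} {c : ℝ≥0∞} {W p : PMF 𝒴}

variable (c W p) in
def clamp (y : 𝒴) : ℝ≥0∞ := max (min (p y) (c * W y)) (c⁻¹ * W y)

lemma clamp_le_mul (hc : 1 ≤ c) (y : 𝒴) : clamp c W p y ≤ c * W y :=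
  max_le (min_le_right _ _) (by gcongr; exact (ENNReal.inv_le_one.2 hc).trans hc)

lemma inv_mul_le_clamp (y : 𝒴) : c⁻¹ * W y ≤ clamp c W p y := le_max_right _ _

lemma tsub_clamp_le (y : 𝒴) : p y - clamp c W p y ≤ p y - c * W y :=
  (tsub_le_tsub_left (le_max_left _ _) _).trans_eq tsub_min

lemma clamp_tsub_le (y : 𝒴) : clamp c W p y - p y ≤ c⁻¹ * W y - p y :=
  tsub_le_iff_right.2 <| max_le ((min_le_left _ _).trans le_add_self) le_tsub_add

lemma tsum_clamp_le : ∑' y, clamp c W p y ≤ 1 + ∑' y, (c⁻¹ * W y - p y) :=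
  (tsum_le_tsum_add_tsum_tsub _ p).trans <| by
    rw [p.tsum_coe]; exact add_le_add le_rfl (ENNReal.tsum_le_tsum clamp_tsub_le)

lemma one_le_tsum_clamp_add : 1 ≤ ∑' y, clamp c W p y + ∑' y, (p y - c * W y) :=
  p.tsum_coe.symm.le.trans <| (tsum_le_tsum_add_tsum_tsub p (clamp c W p)).trans <|
    add_le_add le_rfl (ENNReal.tsum_le_tsum tsub_clamp_le)

lemma tsum_clamp_ne_zero (hc : c ≠ ⊤) : ∑' y, clamp c W p y ≠ 0 := by
  refine ne_bot_of_le_ne_bot ?_ (ENNReal.tsum_le_tsum inv_mul_le_clamp)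
  rw [ENNReal.tsum_mul_left, W.tsum_coe, mul_one]
  exact ENNReal.inv_ne_zero.2 hc

lemma tsum_clamp_ne_top (hc : c ≠ 0) : ∑' y, clamp c W p y ≠ ⊤ := by
  refine ne_top_of_le_ne_top ?_ tsum_clamp_le
  refine ENNReal.add_ne_top.2 ⟨ENNReal.one_ne_top, ne_top_of_le_ne_top ?_
    (ENNReal.tsum_le_tsum fun y => tsub_le_self)⟩
  rw [ENNReal.tsum_mul_left, W.tsum_coe, mul_one]
  exact ENNReal.inv_ne_top.2 hc

/-- On `S = {c W < p}` we have `W(S) ≤ c⁻¹ p(S)`, hence `p(S) ≤ E c⁻¹ p(S) + d ≤ p(S) / 2 + d`. -/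
lemma tsum_tsub_mul_le {E d : ℝ≥0∞} (hE : E * c⁻¹ ≤ 2⁻¹) (hc0 : c ≠ 0) (hc : c ≠ ⊤)
    (h : ∀ T, p.toOuterMeasure T ≤ E * W.toOuterMeasure T + d) :
    ∑' y, (p y - c * W y) ≤ 2 * d := by
  set S : Set 𝒴 := {y | c * W y < p y}
  have h_sum : ∑' y, (p y - c * W y) ≤ p.toOuterMeasure S := by
    rw [PMF.toOuterMeasure_apply]
    refine ENNReal.tsum_le_tsum fun y => ?_
    by_cases hy : y ∈ S
    · rw [Set.indicator_of_mem hy]; exact tsub_le_self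
    · rw [tsub_eq_zero_of_le (not_lt.1 hy)]; exact zero_le
  have h_W : W.toOuterMeasure S ≤ c⁻¹ * p.toOuterMeasure S := by
    rw [PMF.toOuterMeasure_apply, PMF.toOuterMeasure_apply, ← ENNReal.tsum_mul_left]
    refine ENNReal.tsum_le_tsum fun y => ?_
    by_cases hy : y ∈ S
    · rw [Set.indicator_of_mem hy, Set.indicator_of_mem hy,
        ← ENNReal.inv_mul_cancel_left hc0 hc (b := W y)]
      exact mul_le_mul_right hy.le _
    · simp [Set.indicator_of_notMem hy]
  have hS_top : p.toOuterMeasure S ≠ ⊤ :=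
    ne_top_of_le_ne_top ENNReal.one_ne_top (toOuterMeasure_le_one _ _)
  refine h_sum.trans (le_two_mul_of_le_inv_two_mul_add hS_top ?_)
  calc p.toOuterMeasure S ≤ E * W.toOuterMeasure S + d := h S
    _ ≤ E * (c⁻¹ * p.toOuterMeasure S) + d := by gcongr
    _ = E * c⁻¹ * p.toOuterMeasure S + d := by rw [mul_assoc]
    _ ≤ 2⁻¹ * p.toOuterMeasure S + d := by gcongr

lemma tsum_inv_mul_tsub_le {E d : ℝ≥0∞} (hE : E * c⁻¹ ≤ 2⁻¹) (hc : 1 ≤ c) (hc' : c ≠ ⊤)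
    (h : ∀ T, W.toOuterMeasure T ≤ E * p.toOuterMeasure T + d) :
    ∑' y, (c⁻¹ * W y - p y) ≤ 2 * d := by
  have hc0 : c ≠ 0 := (zero_lt_one.trans_le hc).ne'
  refine (ENNReal.tsum_le_tsum fun y => ?_).trans (tsum_tsub_mul_le hE hc0 hc' h)
  calc c⁻¹ * W y - p y = c⁻¹ * (W y - c * p y) := by
        rw [ENNReal.mul_sub fun _ _ => ENNReal.inv_ne_top.2 hc0,
          ENNReal.inv_mul_cancel_left hc0 hc']
    _ ≤ W y - c * p y := mul_le_of_le_one_left' (ENNReal.inv_le_one.2 hc)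

variable (c W p) in
def clampPMF (hc0 : c ≠ 0) (hc : c ≠ ⊤) : PMF 𝒴 :=
  PMF.normalize (clamp c W p) (tsum_clamp_ne_zero hc) (tsum_clamp_ne_top hc0)

lemma clampPMF_mul_tsum_clamp (hc0 : c ≠ 0) (hc : c ≠ ⊤) (y : 𝒴) :
    clampPMF c W p hc0 hc y * ∑' z, clamp c W p z = clamp c W p y := by
  rw [clampPMF, PMF.normalize_apply, mul_assoc,
    ENNReal.inv_mul_cancel (tsum_clamp_ne_zero hc) (tsum_clamp_ne_top hc0), mul_one]

lemma clampPMF_le_mul {p' : PMF 𝒴} (hc : 1 ≤ c) (hc0 : c ≠ 0) (hc' : c ≠ ⊤)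
    (hm : ∑' z, clamp c W p' z ≤ 2 * ∑' z, clamp c W p z) (y : 𝒴) :
    clampPMF c W p hc0 hc' y ≤ 2 * c ^ 2 * clampPMF c W p' hc0 hc' y := by
  set m := ∑' z, clamp c W p z
  calc clampPMF c W p hc0 hc' y = clamp c W p y * m⁻¹ := PMF.normalize_apply _ _ _
    _ ≤ c * W y * m⁻¹ := by gcongr; exact clamp_le_mul hc y
    _ = c ^ 2 * (c⁻¹ * W y) * m⁻¹ := by
        rw [sq, mul_assoc c c, ENNReal.mul_inv_cancel_left hc0 hc']
    _ ≤ c ^ 2 * clamp c W p' y * m⁻¹ := by gcongr; exact inv_mul_le_clamp y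
    _ = c ^ 2 * clampPMF c W p' hc0 hc' y * (∑' z, clamp c W p' z) * m⁻¹ := by
        rw [mul_assoc (c ^ 2) (clampPMF c W p' hc0 hc' y), clampPMF_mul_tsum_clamp]
    _ ≤ c ^ 2 * clampPMF c W p' hc0 hc' y * (2 * m) * m⁻¹ := by gcongr
    _ = 2 * c ^ 2 * clampPMF c W p' hc0 hc' y := by
        rw [mul_assoc, mul_assoc 2, ENNReal.mul_inv_cancel (tsum_clamp_ne_zero hc')
          (tsum_clamp_ne_top hc0), mul_one]
        ring

lemma tsum_tsub_clampPMF_le {d : ℝ≥0∞} (hc0 : c ≠ 0) (hc : c ≠ ⊤)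
    (hm : ∑' z, clamp c W p z ≤ 1 + 2 * d) :
    ∑' y, (p y - clampPMF c W p hc0 hc y) ≤ ∑' y, (p y - c * W y) + 2 * d := by
  set q := clampPMF c W p hc0 hc
  have h_excess : ∀ y, clamp c W p y - q y ≤ q y * (2 * d) := fun y => by
    rw [tsub_le_iff_left, ← clampPMF_mul_tsum_clamp hc0 hc y]
    calc q y * ∑' z, clamp c W p z ≤ q y * (1 + 2 * d) := by gcongr
      _ = q y + q y * (2 * d) := by ring
  calc ∑' y, (p y - q y) ≤ ∑' y, ((p y - clamp c W p y) + (clamp c W p y - q y)) :=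
        ENNReal.tsum_le_tsum fun y => tsub_le_tsub_add_tsub
    _ ≤ ∑' y, ((p y - c * W y) + q y * (2 * d)) :=
        ENNReal.tsum_le_tsum fun y => add_le_add (tsub_clamp_le y) (h_excess y)
    _ = ∑' y, (p y - c * W y) + 2 * d := by
        rw [ENNReal.tsum_add, ENNReal.tsum_mul_right, q.tsum_coe, one_mul]

end Clamp

section Privacy

variable {𝒳 : Type u} {𝒴 : Type v}

lemma RandDP.mono {R : 𝒳 → PMF 𝒴} {ε ε' δ δ' : ℝ} (h : RandDP R ε δ) (hε : ε ≤ ε')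
    (hδ : δ ≤ δ') : RandDP R ε' δ' :=
  fun x x' T => (h x x' T).trans <| by gcongr

lemma randDP_of_forall_le {R : 𝒳 → PMF 𝒴} {ε : ℝ}
    (h : ∀ x x' y, R x y ≤ ENNReal.ofReal (Real.exp ε) * R x' y) : RandDP R ε 0 := by
  intro x x' T
  rw [ENNReal.ofReal_zero, add_zero, PMF.toOuterMeasure_apply, PMF.toOuterMeasure_apply,
    ← ENNReal.tsum_mul_left]
  refine ENNReal.tsum_le_tsum fun y => ?_
  by_cases hy : y ∈ T <;> simp [hy, h x x' y]

lemma randDP_const (p : PMF 𝒴) {ε : ℝ} (hε : 0 ≤ ε) : RandDP (fun _ : 𝒳 => p) ε 0 :=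
  randDP_of_forall_le fun _ _ _ =>
    le_mul_of_one_le_left' (ENNReal.one_le_ofReal.2 (Real.one_le_exp hε))

theorem RandDP.exists_randDP_zero_tsum_tsub_le [Nonempty 𝒳] {R : 𝒳 → PMF 𝒴} {ε δ : ℝ}
    (hR : RandDP R ε δ) (hε : 2 ≤ Real.exp (2 * ε)) (hδ : 6 * δ ≤ 1) :
    ∃ R' : 𝒳 → PMF 𝒴, RandDP R' (8 * ε) 0 ∧
      ∀ x, ∑' y, (R x y - R' x y) ≤ 4 * ENNReal.ofReal δ := by
  obtain ⟨x₀⟩ := ‹Nonempty 𝒳›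
  have hε0 : 0 < ε := by linarith [Real.one_lt_exp_iff.1 (by linarith : 1 < Real.exp (2 * ε))]
  set c := ENNReal.ofReal (Real.exp (3 * ε))
  set d := ENNReal.ofReal δ
  have hc : 1 ≤ c := ENNReal.one_le_ofReal.2 (Real.one_le_exp (by linarith))
  have hc0 : c ≠ 0 := (zero_lt_one.trans_le hc).ne'
  have hc' : c ≠ ⊤ := ENNReal.ofReal_ne_top
  have hE : ENNReal.ofReal (Real.exp ε) * c⁻¹ ≤ 2⁻¹ := by
    rw [← ENNReal.ofReal_inv_of_pos (Real.exp_pos _), ← ENNReal.ofReal_mul (Real.exp_pos _).le,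
      ← ENNReal.ofReal_ofNat 2, ← ENNReal.ofReal_inv_of_pos two_pos, ← Real.exp_neg,
      ← Real.exp_add, show ε + -(3 * ε) = -(2 * ε) by ring, Real.exp_neg]
    exact ENNReal.ofReal_le_ofReal (inv_anti₀ two_pos hε)
  have hd : 6 * d ≤ 1 := by
    rw [← ENNReal.ofReal_ofNat 6, ← ENNReal.ofReal_mul (by norm_num), ← ENNReal.ofReal_one]
    exact ENNReal.ofReal_le_ofReal hδ
  have h2c : 2 * c ^ 2 ≤ ENNReal.ofReal (Real.exp (8 * ε)) := by
    rw [← ENNReal.ofReal_pow (Real.exp_pos _).le, ← ENNReal.ofReal_ofNat 2,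
      ← ENNReal.ofReal_mul (by norm_num), ← Real.exp_nat_mul,
      show 8 * ε = 2 * ε + (2:ℕ) * (3 * ε) by push_cast; ring, Real.exp_add]
    exact ENNReal.ofReal_le_ofReal (by gcongr)
  have hup : ∀ x, ∑' y, clamp c (R x₀) (R x) y ≤ 1 + 2 * d := fun x =>
    tsum_clamp_le.trans (add_le_add le_rfl (tsum_inv_mul_tsub_le hE hc hc' (hR x₀ x)))
  have hlow : ∀ x, 1 ≤ ∑' y, clamp c (R x₀) (R x) y + 2 * d := fun x =>
    one_le_tsum_clamp_add.trans (add_le_add le_rfl (tsum_tsub_mul_le hE hc0 hc' (hR x x₀)))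
  refine ⟨fun x => clampPMF c (R x₀) (R x) hc0 hc', randDP_of_forall_le fun x x' y => ?_,
    fun x => ?_⟩
  · calc clampPMF c (R x₀) (R x) hc0 hc' y
        ≤ 2 * c ^ 2 * clampPMF c (R x₀) (R x') hc0 hc' y :=
          clampPMF_le_mul hc hc0 hc' (le_two_mul_of_le_one_add (hup x') (hlow x) hd) y
      _ ≤ _ := by gcongr
  · calc ∑' y, (R x y - clampPMF c (R x₀) (R x) hc0 hc' y)
        ≤ ∑' y, (R x y - c * R x₀ y) + 2 * d := tsum_tsub_clampPMF_le hc0 hc' (hup x)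
      _ ≤ 2 * d + 2 * d := add_le_add (tsum_tsub_mul_le hE hc0 hc' (hR x x₀)) le_rfl
      _ = 4 * d := by ring

end Privacy

section Accuracy

variable {I : Type u} {𝒵 : Type w} {P : I → PMF 𝒵} {f : I → 𝒵} {d : 𝒵 → 𝒵 → ℝ} {a b b' : ℝ}

lemma AccFor.mono (h : AccFor P f d a b) (hb : b ≤ b') : AccFor P f d a b' :=
  fun X => (ENNReal.ofReal_le_ofReal (by linarith)).trans (h X)

lemma accFor_of_one_le (hb : 1 ≤ b) : AccFor P f d a b := fun X => by
  rw [ENNReal.ofReal_of_nonpos (by linarith)]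
  exact zero_le

end Accuracy

lemma AccFor.localOut_of_tsum_tsub_le {𝒳 : Type u} {𝒴 : Type v} {𝒵 : Type w} {n : ℕ}
    {R R' : 𝒳 → PMF 𝒴} {A : List 𝒴 → 𝒵} {f : (Fin n → 𝒳) → 𝒵} {d : 𝒵 → 𝒵 → ℝ}
    {α β η : ℝ} (hacc : AccFor (localOut n R A) f d α β) (hη : 0 ≤ η)
    (h : ∀ x, ∑' y, (R x y - R' x y) ≤ ENNReal.ofReal η) :
    AccFor (localOut n R' A) f d α (β + n * η) := fun X => by
  have hX := hacc X
  simp only [localOut, PMF.toOuterMeasure_map_apply] at hX ⊢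
  rw [show 1 - (β + n * η) = (1 - β) - n * η by ring, ENNReal.ofReal_sub _ (by positivity),
    tsub_le_iff_right, ENNReal.ofReal_mul (Nat.cast_nonneg n), ENNReal.ofReal_natCast]
  exact hX.trans (indep_toOuterMeasure_le_add (fun i => h (X i)) _)

lemma natCast_mul_le_of_lt_div_log {n : ℕ} {β δ ε : ℝ} (hn : n ≠ 0) (hβ : 0 < β)
    (hβ' : β < 1 / 4) (hε : 0 ≤ ε)
    (h : δ < β / (8 * n * Real.log (n / β)) * Real.exp (-(6 * ε))) : n * δ ≤ β / 8 := by
  have hn1 : (1 : ℝ) ≤ n := by exact_mod_cast Nat.one_le_iff_ne_zero.2 hn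
  have hlog : 1 ≤ Real.log (n / β) := by
    rw [Real.le_log_iff_exp_le (by positivity)]
    have : 4 ≤ n / β := by rw [le_div_iff₀ hβ]; linarith
    linarith [Real.exp_one_lt_d9]
  have hδ : δ ≤ β / (8 * n) :=
    calc δ ≤ β / (8 * n * Real.log (n / β)) * Real.exp (-(6 * ε)) := h.le
      _ ≤ β / (8 * n * Real.log (n / β)) :=
          mul_le_of_le_one_right (by positivity) (Real.exp_le_one_iff.2 (by linarith))
      _ ≤ β / (8 * n) :=
          div_le_div_of_nonneg_left hβ.le (by positivity)
            (le_mul_of_one_le_right (by positivity) hlog)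
  calc n * δ ≤ n * (β / (8 * n)) := by gcongr
    _ = β / 8 := by field_simp

/-- extension of Bun–Nelson–Stemmer: if `R` is `(ε,δ)`-DP with
`ε > 2/3` and `δ < (β/(8n ln(n/β))) e^{-6ε}`, and the local protocol `(R, A)` is
`(α,β)`-accurate for `f` w.r.t. `d`, then there is a local randomizer `R'` that is
`(8ε,0)`-DP such that `(R', A)` is `(α,4β)`-accurate for `f` w.r.t. `d`. -/
theorem stmt16 {𝒳 : Type u} {𝒴 : Type v} {𝒵 : Type w} (n : ℕ) (R : 𝒳 → PMF 𝒴)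
    (eps del beta : ℝ) (hbeta : beta ∈ Set.Ioo (0 : ℝ) 1) (heps : 2 / 3 < eps)
    (hdel : del < beta / (8 * n * Real.log (n / beta)) * Real.exp (-(6 * eps)))
    (hRdp : RandDP R eps del)
    (A : List 𝒴 → 𝒵) (f : (Fin n → 𝒳) → 𝒵) (d : 𝒵 → 𝒵 → ℝ) (alpha : ℝ)
    (hacc : AccFor (localOut n R A) f d alpha beta) :
    ∃ R' : 𝒳 → PMF 𝒴,
      RandDP R' (8 * eps) 0 ∧ AccFor (localOut n R' A) f d alpha (4 * beta) := by
  have hβ := hbeta.1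
  rcases isEmpty_or_nonempty 𝒳 with h𝒳 | h𝒳
  · exact ⟨R, fun x => isEmptyElim x, hacc.mono (by linarith)⟩
  rcases le_or_gt (1 / 4) beta with hβ' | hβ'
  · obtain ⟨y, -⟩ := (R (Classical.arbitrary 𝒳)).support_nonempty
    exact ⟨fun _ => PMF.pure y, randDP_const _ (by linarith), accFor_of_one_le (by linarith)⟩
  rcases le_or_gt del 0 with hδ | hδ
  · exact ⟨R, hRdp.mono (by linarith) hδ, hacc.mono (by linarith)⟩
  have hn : n ≠ 0 := by
    rintro rfl
    simp only [Nat.cast_zero, mul_zero, zero_mul, div_zero] at hdel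
    linarith
  have hn1 : (1 : ℝ) ≤ n := by exact_mod_cast Nat.one_le_iff_ne_zero.2 hn
  have hnδ := natCast_mul_le_of_lt_div_log hn hβ hβ' (by linarith) hdel
  obtain ⟨R', hR'dp, hR'⟩ := hRdp.exists_randDP_zero_tsum_tsub_le
    (by linarith [Real.add_one_le_exp (2 * eps)]) (by nlinarith)
  refine ⟨R', hR'dp, (hacc.localOut_of_tsum_tsub_le (η := 4 * del) (by positivity)
    fun x => ?_).mono (by nlinarith)⟩
  rw [ENNReal.ofReal_mul (by norm_num), ENNReal.ofReal_ofNat]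
  exact hR' x

end ShuffledDP
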